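/- Let M be a compact smooth manifold and let 𝓜 be a finitely generated projective module over C^∞(M,ℂ). Then the rank function x ↦ dim_ℂ 𝓜/(I_x·𝓜) takes finite values and is locally constant on M. -/

import Mathlib

open Bundle Manifold
open scoped TensorProduct

local notation "∞" => (⊤ : ℕ∞)

noncomputable section

/-- Complex multiplication and addition are smooth over `ℝ`, so that the complex-valued smooth
functions on a real manifold form a (comm)ring. -/
instance : ContMDiffRing 𝓘(ℝ, ℂ) (⊤ : ℕ∞) ℂ where
  contMDiff_add := by
    rw [contMDiff_iff]
    refine ⟨continuous_add, fun x y => ?_⟩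
    simp only [mfld_simps]
    exact contDiff_add.contDiffOn
  contMDiff_mul := by
    rw [contMDiff_iff]
    refine ⟨continuous_mul, fun x y => ?_⟩
    simp only [mfld_simps]
    exact contDiff_mul.contDiffOn

variable {EM : Type*} [NormedAddCommGroup EM] [NormedSpace ℝ EM] [FiniteDimensional ℝ EM]
  {HM : Type*} [TopologicalSpace HM] {IM : ModelWithCorners ℝ EM HM}
  {M : Type*} [TopologicalSpace M] [ChartedSpace HM M] [IsManifold IM (⊤ : ℕ∞) M]
  [T2Space M] [SecondCountableTopology M] [CompactSpace M]

/-- The constant functions make the smooth complex-valued functions a `ℂ`-algebra. -/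
instance : Algebra ℂ C^∞⟮IM, M; 𝓘(ℝ, ℂ), ℂ⟯ :=
  RingHom.toAlgebra
    { toFun := fun c => ⟨fun _ => c, contMDiff_const⟩
      map_one' := rfl
      map_mul' := fun _ _ => rfl
      map_zero' := rfl
      map_add' := fun _ _ => rfl }

/-- `I_x`, the ideal of smooth complex-valued functions vanishing at the point `x`. -/
def SmoothMap.idealOfPoint (x : M) : Ideal C^∞⟮IM, M; 𝓘(ℝ, ℂ), ℂ⟯ :=
  RingHom.ker (ContMDiffMap.evalRingHom x : C^∞⟮IM, M; 𝓘(ℝ, ℂ), ℂ⟯ →+* ℂ)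

/-!
Evaluation at `x` identifies `R ⧸ I_x` with `ℂ` for `R = C^∞(M, ℂ)`, so
`𝓜 ⧸ I_x 𝓜 ≅ (R ⧸ I_x) ⊗_R 𝓜` is the base change of `𝓜` to the residue field of the maximal ideal
`I_x`, and its `ℂ`-dimension is the rank of `𝓜` at the point `I_x` of `Spec R`. For a finitely
presented flat module this rank is locally constant on `Spec R`, and `x ↦ I_x` is continuous from
`M` to `Spec R`, because the preimage of the basic open set of `f` is `{x | f x ≠ 0}`.
-/

open Module TensorProduct

lemma AlgHom.surjective_of_codomain_eq_base {K R : Type*} [CommSemiring K] [Semiring R]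
    [Algebra K R] (φ : R →ₐ[K] K) : Function.Surjective φ :=
  fun c ↦ ⟨algebraMap K R c, φ.commutes c⟩

lemma PrimeSpectrum.continuous_mk_ker {X R K : Type*} [TopologicalSpace X] [CommRing R]
    [Field K] [TopologicalSpace K] [T1Space K] (ψ : X → R →+* K)
    (hψ : ∀ r, Continuous fun x ↦ ψ x r) :
    Continuous fun x ↦ (⟨RingHom.ker (ψ x), RingHom.ker_isPrime _⟩ : PrimeSpectrum R) := by
  refine PrimeSpectrum.isTopologicalBasis_basic_opens.continuous_iff.mpr ?_
  rintro _ ⟨r, rfl⟩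
  exact (hψ r).isOpen_preimage _ isOpen_compl_singleton

section Fiber

variable {R 𝓝 : Type*} [CommRing R] [AddCommGroup 𝓝] [Module R 𝓝]

lemma Module.rankAtStalk_eq_finrank_quotient_smul_top [Module.Finite R 𝓝] [Module.Flat R 𝓝]
    (I : Ideal R) [I.IsMaximal] :
    rankAtStalk 𝓝 ⟨I, inferInstance⟩ = finrank (R ⧸ I) (𝓝 ⧸ I • (⊤ : Submodule R 𝓝)) := by
  have hbc : IsBaseChange (R ⧸ I) (I • ⊤ : Submodule R 𝓝).mkQ :=
    .of_equiv ((quotTensorEquivQuotSMul 𝓝 I).extendScalarsOfSurjective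
      Ideal.Quotient.mk_surjective) fun _ ↦ by simp
  have hcomap : PrimeSpectrum.comap (algebraMap R (R ⧸ I)) ⟨⊥, Ideal.isPrime_bot⟩ =
      ⟨I, inferInstance⟩ :=
    PrimeSpectrum.ext (Ideal.mk_ker (I := I))
  let := Ideal.Quotient.field I
  rw [← hcomap, ← rankAtStalk_isBaseChange hbc, rankAtStalk_eq_finrank_of_free]
  rfl

variable {K : Type*} [Field K] [Algebra K R] [Module K 𝓝] [IsScalarTower K R 𝓝]
  (φ : R →ₐ[K] K)

lemma rank_quotient_ker_smul_top_eq_rank_over_quotient :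
    Module.rank K (𝓝 ⧸ RingHom.ker φ • (⊤ : Submodule R 𝓝)) =
      Module.rank (R ⧸ RingHom.ker φ) (𝓝 ⧸ RingHom.ker φ • (⊤ : Submodule R 𝓝)) := by
  have e := Ideal.quotientKerAlgEquivOfSurjective φ.surjective_of_codomain_eq_base
  have halg : ⇑(algebraMap K (R ⧸ RingHom.ker φ)) = e.symm :=
    funext fun c ↦ (e.symm.commutes c).symm
  exact rank_eq_of_equiv_equiv (algebraMap K _) (AddEquiv.refl _) (halg ▸ e.symm.bijective)
    fun c m ↦ (algebraMap_smul (R ⧸ RingHom.ker φ) c m).symm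

lemma finiteDimensional_quotient_ker_smul_top [Module.Finite R 𝓝] :
    FiniteDimensional K (𝓝 ⧸ RingHom.ker φ • (⊤ : Submodule R 𝓝)) := by
  have := RingHom.ker_isMaximal_of_surjective φ φ.surjective_of_codomain_eq_base
  let := Ideal.Quotient.field (RingHom.ker φ)
  have : Module.Finite (R ⧸ RingHom.ker φ) (𝓝 ⧸ RingHom.ker φ • (⊤ : Submodule R 𝓝)) :=
    .of_restrictScalars_finite R _ _
  exact Module.rank_lt_aleph0_iff.mp
    (rank_quotient_ker_smul_top_eq_rank_over_quotient (𝓝 := 𝓝) φ ▸ Module.rank_lt_aleph0 _ _)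

lemma finrank_quotient_ker_smul_top_eq_rankAtStalk [Module.Finite R 𝓝] [Module.Flat R 𝓝] :
    finrank K (𝓝 ⧸ RingHom.ker φ • (⊤ : Submodule R 𝓝)) =
      rankAtStalk 𝓝 ⟨RingHom.ker φ, RingHom.ker_isPrime φ⟩ := by
  have := RingHom.ker_isMaximal_of_surjective φ φ.surjective_of_codomain_eq_base
  rw [rankAtStalk_eq_finrank_quotient_smul_top, finrank,
    rank_quotient_ker_smul_top_eq_rank_over_quotient, finrank]

end Fiber

def SmoothMap.evalAlgHom (x : M) : C^∞⟮IM, M; 𝓘(ℝ, ℂ), ℂ⟯ →ₐ[ℂ] ℂ :=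
  { ContMDiffMap.evalRingHom x with commutes' := fun _ ↦ rfl }

/-- The rank function of a finitely generated projective module over the smooth complex-valued
functions on a compact manifold takes finite values and is locally constant. -/
theorem rank_locallyConstant_of_projective (𝓜 : Type*) [AddCommGroup 𝓜]
    [Module ℂ 𝓜] [Module C^∞⟮IM, M; 𝓘(ℝ, ℂ), ℂ⟯ 𝓜]
    [IsScalarTower ℂ C^∞⟮IM, M; 𝓘(ℝ, ℂ), ℂ⟯ 𝓜]
    (hfin : Module.Finite C^∞⟮IM, M; 𝓘(ℝ, ℂ), ℂ⟯ 𝓜)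
    (hproj : Module.Projective C^∞⟮IM, M; 𝓘(ℝ, ℂ), ℂ⟯ 𝓜) :
    (∀ x : M, FiniteDimensional ℂ
      (𝓜 ⧸ (SmoothMap.idealOfPoint (IM := IM) x • (⊤ : Submodule C^∞⟮IM, M; 𝓘(ℝ, ℂ), ℂ⟯ 𝓜)))) ∧
    IsLocallyConstant (fun x : M => Module.finrank ℂ
      (𝓜 ⧸ (SmoothMap.idealOfPoint (IM := IM) x • (⊤ : Submodule C^∞⟮IM, M; 𝓘(ℝ, ℂ), ℂ⟯ 𝓜)))) := by
  have := Module.finitePresentation_of_projective C^∞⟮IM, M; 𝓘(ℝ, ℂ), ℂ⟯ 𝓜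
  refine ⟨fun x ↦ finiteDimensional_quotient_ker_smul_top (SmoothMap.evalAlgHom x), ?_⟩
  have hrank : (fun x : M ↦ finrank ℂ
      (𝓜 ⧸ SmoothMap.idealOfPoint (IM := IM) x • (⊤ : Submodule C^∞⟮IM, M; 𝓘(ℝ, ℂ), ℂ⟯ 𝓜))) =
      rankAtStalk 𝓜 ∘ fun x ↦ ⟨RingHom.ker (ContMDiffMap.evalRingHom x), RingHom.ker_isPrime _⟩ :=
    funext fun x ↦ finrank_quotient_ker_smul_top_eq_rankAtStalk (SmoothMap.evalAlgHom x)
  rw [hrank]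
  exact isLocallyConstant_rankAtStalk.comp_continuous
    (PrimeSpectrum.continuous_mk_ker _ fun f ↦ f.contMDiff.continuous)
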